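/- Let A : ℝ → ℝ be continuously differentiable with A(x) ≤ −a₀ for some a₀ > 0 and all x, and ∫_ℝ (1 + |t|)·|A′(t)| dt < ∞. Fix T ∈ ℝ, and let v₁, v₂ : [T, ∞) → ℝ be continuous with |vᵢ(x)| ≤ a₀/2 for all x ≥ T (i = 1, 2). With F(v)(x₀) = −∫_{x₀}^∞ A′(t) · exp( −∫_{x₀}^t (|A(y)| + v(y))⁻¹ dy ) dt, one has sup_{x₀ ≥ T} |F(v₁)(x₀) − F(v₂)(x₀)| ≤ (4/a₀²) · ( ∫_T^∞ (t − T)·|A′(t)| dt ) · sup_{x ≥ T} |v₁(x) − v₂(x)|. -/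
import Mathlib


open MeasureTheory Filter

/-- The map `F` of formula (4.9) arising from the substitution
`r⁺ + A(x₀) = v(x₀)` in the horizon ODE `dr/dx₀ = A(x₀)/r + 1`. -/
noncomputable def horizonMap (A v : ℝ → ℝ) (x₀ : ℝ) : ℝ :=
  -∫ t in Set.Ioi x₀, deriv A t * Real.exp (-∫ y in x₀..t, (|A y| + v y)⁻¹)

/-- `|exp(-a) - exp(-b)| ≤ |a - b|` for nonnegative `a, b`. -/
lemma exp_neg_abs_sub_le {a b : ℝ} (ha : 0 ≤ a) (hb : 0 ≤ b) :
    |Real.exp (-a) - Real.exp (-b)| ≤ |a - b| := by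
  wlog h : b ≤ a generalizing a b
  · rw [abs_sub_comm, abs_sub_comm a b]
    exact this hb ha (le_of_not_ge h)
  have h1 : Real.exp (-a) ≤ Real.exp (-b) := Real.exp_le_exp.2 (by linarith)
  rw [abs_of_nonpos (by linarith), abs_of_nonneg (by linarith)]
  have h2 : Real.exp (-a) = Real.exp (-b) * Real.exp (b - a) := by
    rw [← Real.exp_add]; ring_nf
  have h3 := Real.add_one_le_exp (b - a)
  have h4 : Real.exp (-b) ≤ 1 := Real.exp_le_one_iff.2 (by linarith)
  have h5 : 0 < Real.exp (-b) := Real.exp_pos _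
  have h6 : Real.exp (b - a) ≤ 1 := Real.exp_le_one_iff.2 (by linarith)
  nlinarith [Real.exp_pos (b - a)]

/-- Difference of inverses of quantities bounded below by `a₀/2`. -/
lemma inv_diff_le_of_half_le {a₀ b₁ b₂ M : ℝ} (ha₀ : 0 < a₀) (h1 : a₀ / 2 ≤ b₁)
    (h2 : a₀ / 2 ≤ b₂) (hM : |b₁ - b₂| ≤ M) : |b₁⁻¹ - b₂⁻¹| ≤ 4 / a₀ ^ 2 * M := by
  have hb₁ : 0 < b₁ := lt_of_lt_of_le (by linarith) h1
  have hb₂ : 0 < b₂ := lt_of_lt_of_le (by linarith) h2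
  rw [inv_sub_inv hb₁.ne' hb₂.ne', abs_div, abs_of_pos (mul_pos hb₁ hb₂), abs_sub_comm]
  have hM0 : 0 ≤ M := le_trans (abs_nonneg _) hM
  calc |b₁ - b₂| / (b₁ * b₂) ≤ M / (a₀ / 2 * (a₀ / 2)) :=
        div_le_div₀ hM0 hM (by positivity) (mul_le_mul h1 h2 (by linarith) hb₁.le)
    _ = 4 / a₀ ^ 2 * M := by field_simp; ring

/-- Estimate (4.11) in the proof of Theorem 4.1: on the ball `‖v‖_T ≤ a₀/2` of the
sup-norm space on `[T, ∞)`, the map `F` of (4.9) is Lipschitz with constant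
`(4/a₀²) ∫_T^∞ (t-T)|A'(t)| dt`. -/
theorem horizonMap_lipschitz (A : ℝ → ℝ) (hA : ContDiff ℝ 1 A)
    (a₀ : ℝ) (ha₀ : 0 < a₀) (hAneg : ∀ x, A x ≤ -a₀)
    (hint : Integrable (fun t => (1 + |t|) * |deriv A t|))
    (T : ℝ) (v₁ v₂ : ℝ → ℝ)
    (hv₁ : ContinuousOn v₁ (Set.Ici T)) (hv₂ : ContinuousOn v₂ (Set.Ici T))
    (hv₁b : ∀ x ∈ Set.Ici T, |v₁ x| ≤ a₀ / 2)
    (hv₂b : ∀ x ∈ Set.Ici T, |v₂ x| ≤ a₀ / 2) :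
    ∀ x₀ ∈ Set.Ici T,
      |horizonMap A v₁ x₀ - horizonMap A v₂ x₀| ≤
        4 / a₀ ^ 2 * (∫ t in Set.Ioi T, (t - T) * |deriv A t|) *
          ⨆ x : Set.Ici T, |v₁ (x : ℝ) - v₂ (x : ℝ)| := by
  intro x₀ hx₀
  have hx₀' : T ≤ x₀ := hx₀
  set M := ⨆ x : Set.Ici T, |v₁ (x : ℝ) - v₂ (x : ℝ)| with hMdef
  have hbdd : BddAbove (Set.range fun x : Set.Ici T => |v₁ (x : ℝ) - v₂ (x : ℝ)|) := by
    refine ⟨a₀, ?_⟩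
    rintro r ⟨⟨x, hx⟩, rfl⟩
    calc |v₁ x - v₂ x| ≤ |v₁ x| + |v₂ x| := abs_sub _ _
      _ ≤ a₀ / 2 + a₀ / 2 := add_le_add (hv₁b x hx) (hv₂b x hx)
      _ = a₀ := by ring
  have hM0 : 0 ≤ M := Real.iSup_nonneg fun x => abs_nonneg _
  have hMle : ∀ m ∈ Set.Ici T, |v₁ m - v₂ m| ≤ M := fun m hm =>
    le_ciSup hbdd (⟨m, hm⟩ : Set.Ici T)
  -- projection onto [T, ∞)
  set p : ℝ → ℝ := fun y => max y T with hpdef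
  have hpmem : ∀ y, p y ∈ Set.Ici T := fun y => le_max_right y T
  have hpc : Continuous p := continuous_id.max continuous_const
  have key : ∀ (v : ℝ → ℝ), (∀ x ∈ Set.Ici T, |v x| ≤ a₀ / 2) →
      ∀ m ∈ Set.Ici T, a₀ / 2 ≤ |A m| + v m := by
    intro v hv m hm
    have h1 : a₀ ≤ |A m| := by
      have := hAneg m
      rw [abs_of_nonpos (by linarith)]
      linarith
    have := (abs_le.1 (hv m hm)).1
    linarith
  set g₁ : ℝ → ℝ := fun y => (|A (p y)| + v₁ (p y))⁻¹ with hg₁def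
  set g₂ : ℝ → ℝ := fun y => (|A (p y)| + v₂ (p y))⁻¹ with hg₂def
  have hg₁pos : ∀ y, 0 < g₁ y := fun y =>
    inv_pos.2 (lt_of_lt_of_le (by linarith) (key v₁ hv₁b _ (hpmem y)))
  have hg₂pos : ∀ y, 0 < g₂ y := fun y =>
    inv_pos.2 (lt_of_lt_of_le (by linarith) (key v₂ hv₂b _ (hpmem y)))
  have hAc : Continuous A := hA.continuous
  have hA'c : Continuous (deriv A) := hA.continuous_deriv le_rfl
  have hg₁c : Continuous g₁ := by
    refine ((hAc.comp hpc).abs.add (hv₁.comp_continuous hpc hpmem)).inv₀ fun y => ?_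
    exact ne_of_gt (lt_of_lt_of_le (by linarith) (key v₁ hv₁b _ (hpmem y)))
  have hg₂c : Continuous g₂ := by
    refine ((hAc.comp hpc).abs.add (hv₂.comp_continuous hpc hpmem)).inv₀ fun y => ?_
    exact ne_of_gt (lt_of_lt_of_le (by linarith) (key v₂ hv₂b _ (hpmem y)))
  set I₁ : ℝ → ℝ := fun t => ∫ y in x₀..t, g₁ y with hI₁def
  set I₂ : ℝ → ℝ := fun t => ∫ y in x₀..t, g₂ y with hI₂def
  have hI₁c : Continuous I₁ :=
    intervalIntegral.continuous_primitive (fun a b => hg₁c.intervalIntegrable a b) x₀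
  have hI₂c : Continuous I₂ :=
    intervalIntegral.continuous_primitive (fun a b => hg₂c.intervalIntegrable a b) x₀
  have hI₁nn : ∀ t, x₀ ≤ t → 0 ≤ I₁ t := fun t ht =>
    intervalIntegral.integral_nonneg ht fun y _ => (hg₁pos y).le
  have hI₂nn : ∀ t, x₀ ≤ t → 0 ≤ I₂ t := fun t ht =>
    intervalIntegral.integral_nonneg ht fun y _ => (hg₂pos y).le
  -- pointwise bound on difference of inner integrands
  have hgdiff : ∀ y, |g₁ y - g₂ y| ≤ 4 / a₀ ^ 2 * M := by
    intro y
    have hm : p y ∈ Set.Ici T := hpmem y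
    exact inv_diff_le_of_half_le ha₀ (key v₁ hv₁b _ hm) (key v₂ hv₂b _ hm)
      (by simpa using hMle (p y) hm)
  -- inner integral difference bound
  have hIdiff : ∀ t, x₀ ≤ t → |I₁ t - I₂ t| ≤ 4 / a₀ ^ 2 * M * (t - x₀) := by
    intro t ht
    have hsub : I₁ t - I₂ t = ∫ y in x₀..t, (g₁ y - g₂ y) :=
      (intervalIntegral.integral_sub (hg₁c.intervalIntegrable x₀ t)
        (hg₂c.intervalIntegrable x₀ t)).symm
    rw [hsub]
    have := intervalIntegral.norm_integral_le_of_norm_le_const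
      (C := 4 / a₀ ^ 2 * M) (f := fun y => g₁ y - g₂ y) (a := x₀) (b := t)
      (fun y _ => by simpa using hgdiff y)
    simpa [abs_of_nonneg (sub_nonneg.2 ht)] using this
  -- the integrands
  set f₁ : ℝ → ℝ := fun t => deriv A t * Real.exp (-I₁ t) with hf₁def
  set f₂ : ℝ → ℝ := fun t => deriv A t * Real.exp (-I₂ t) with hf₂def
  have hf₁c : Continuous f₁ := hA'c.mul (Real.continuous_exp.comp hI₁c.neg)
  have hf₂c : Continuous f₂ := hA'c.mul (Real.continuous_exp.comp hI₂c.neg)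
  -- integrability of |A'|
  have habsint : Integrable (fun t => |deriv A t|) := by
    refine hint.mono hA'c.abs.aestronglyMeasurable (ae_of_all _ fun t => ?_)
    rw [Real.norm_eq_abs, Real.norm_eq_abs, abs_abs,
      abs_of_nonneg (by positivity : (0:ℝ) ≤ (1 + |t|) * |deriv A t|)]
    nlinarith [abs_nonneg t, abs_nonneg (deriv A t)]
  -- integrability of the moment functions
  have hmom : ∀ c : ℝ, Integrable (fun t => (t - c) * |deriv A t|) := by
    intro c
    refine (hint.const_mul (1 + |c|)).mono
      ((continuous_id.sub continuous_const).mul hA'c.abs).aestronglyMeasurable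
      (ae_of_all _ fun t => ?_)
    rw [Real.norm_eq_abs, Real.norm_eq_abs, abs_mul, abs_abs,
      abs_of_nonneg (by positivity : (0:ℝ) ≤ (1 + |c|) * ((1 + |t|) * |deriv A t|))]
    have h1 : |t - c| ≤ (1 + |c|) * (1 + |t|) := by
      have := abs_sub t c
      nlinarith [abs_nonneg t, abs_nonneg c]
    nlinarith [abs_nonneg (deriv A t), abs_nonneg (t - c)]
  -- integrability of f₁, f₂ on Ioi x₀
  have hfint : ∀ (f I : ℝ → ℝ), Continuous f → (f = fun t => deriv A t * Real.exp (-I t)) →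
      (∀ t, x₀ ≤ t → 0 ≤ I t) → IntegrableOn f (Set.Ioi x₀) := by
    intro f I hfc hfeq hInn
    refine Integrable.mono habsint.integrableOn hfc.aestronglyMeasurable.restrict ?_
    refine (ae_restrict_iff' measurableSet_Ioi).2 (ae_of_all _ fun t ht => ?_)
    rw [Real.norm_eq_abs, Real.norm_eq_abs, abs_abs, hfeq, abs_mul]
    have h1 : |Real.exp (-I t)| ≤ 1 := by
      rw [abs_of_pos (Real.exp_pos _)]
      exact Real.exp_le_one_iff.2 (by linarith [hInn t (le_of_lt ht)])
    nlinarith [abs_nonneg (deriv A t)]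
  have hf₁int : IntegrableOn f₁ (Set.Ioi x₀) := hfint f₁ I₁ hf₁c hf₁def hI₁nn
  have hf₂int : IntegrableOn f₂ (Set.Ioi x₀) := hfint f₂ I₂ hf₂c hf₂def hI₂nn
  -- rewrite horizonMap via f₁, f₂
  have hrw : ∀ (v g I : ℝ → ℝ), (g = fun y => (|A (p y)| + v (p y))⁻¹) →
      (I = fun t => ∫ y in x₀..t, g y) →
      horizonMap A v x₀ = -∫ t in Set.Ioi x₀, deriv A t * Real.exp (-I t) := by
    intro v g I hg hI
    unfold horizonMap
    congr 1
    refine setIntegral_congr_fun measurableSet_Ioi fun t ht => ?_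
    have : (∫ y in x₀..t, (|A y| + v y)⁻¹) = I t := by
      rw [hI]
      refine intervalIntegral.integral_congr fun y hy => ?_
      rw [Set.uIcc_of_le (le_of_lt ht)] at hy
      have hpy : p y = y := max_eq_left (le_trans hx₀' hy.1)
      rw [hg]
      simp only [hpy]
    rw [this]
  rw [hrw v₁ g₁ I₁ hg₁def hI₁def, hrw v₂ g₂ I₂ hg₂def hI₂def]
  have hsub : (-∫ t in Set.Ioi x₀, f₁ t) - (-∫ t in Set.Ioi x₀, f₂ t)
      = ∫ t in Set.Ioi x₀, (f₂ t - f₁ t) := by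
    rw [integral_sub hf₂int hf₁int]; ring
  rw [hsub]
  -- bound the integral
  have hbint : IntegrableOn (fun t => 4 / a₀ ^ 2 * M * ((t - x₀) * |deriv A t|))
      (Set.Ioi x₀) := ((hmom x₀).const_mul _).integrableOn
  have hae : ∀ᵐ t ∂(volume.restrict (Set.Ioi x₀)),
      ‖f₂ t - f₁ t‖ ≤ 4 / a₀ ^ 2 * M * ((t - x₀) * |deriv A t|) := by
    refine (ae_restrict_iff' measurableSet_Ioi).2 (ae_of_all _ fun t ht => ?_)
    have ht' : x₀ ≤ t := le_of_lt ht
    have hE : |Real.exp (-I₂ t) - Real.exp (-I₁ t)| ≤ 4 / a₀ ^ 2 * M * (t - x₀) := by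
      refine le_trans (exp_neg_abs_sub_le (hI₂nn t ht') (hI₁nn t ht')) ?_
      rw [abs_sub_comm]
      exact hIdiff t ht'
    have : f₂ t - f₁ t = deriv A t * (Real.exp (-I₂ t) - Real.exp (-I₁ t)) := by
      rw [hf₁def, hf₂def]; ring
    rw [Real.norm_eq_abs, this, abs_mul]
    calc |deriv A t| * |Real.exp (-I₂ t) - Real.exp (-I₁ t)|
        ≤ |deriv A t| * (4 / a₀ ^ 2 * M * (t - x₀)) :=
          mul_le_mul_of_nonneg_left hE (abs_nonneg _)
      _ = 4 / a₀ ^ 2 * M * ((t - x₀) * |deriv A t|) := by ring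
  calc |∫ t in Set.Ioi x₀, (f₂ t - f₁ t)|
      ≤ ∫ t in Set.Ioi x₀, 4 / a₀ ^ 2 * M * ((t - x₀) * |deriv A t|) :=
        norm_integral_le_of_norm_le hbint hae
    _ = 4 / a₀ ^ 2 * M * ∫ t in Set.Ioi x₀, (t - x₀) * |deriv A t| :=
        MeasureTheory.integral_const_mul _ _
    _ ≤ 4 / a₀ ^ 2 * M * ∫ t in Set.Ioi T, (t - T) * |deriv A t| := by
        refine mul_le_mul_of_nonneg_left ?_ (by positivity)
        calc (∫ t in Set.Ioi x₀, (t - x₀) * |deriv A t|)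
            ≤ ∫ t in Set.Ioi x₀, (t - T) * |deriv A t| := by
              refine setIntegral_mono_on (hmom x₀).integrableOn (hmom T).integrableOn
                measurableSet_Ioi fun t _ => ?_
              nlinarith [abs_nonneg (deriv A t)]
          _ ≤ ∫ t in Set.Ioi T, (t - T) * |deriv A t| := by
              refine setIntegral_mono_set (hmom T).integrableOn ?_
                ((Set.Ioi_subset_Ioi hx₀').eventuallyLE)
              refine (ae_restrict_iff' measurableSet_Ioi).2 (ae_of_all _ fun t ht => ?_)
              have h1 : T < t := ht
              have : (0:ℝ) ≤ (fun t => (t - T) * |deriv A t|) t :=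
                mul_nonneg (by linarith) (abs_nonneg _)
              simpa using this
    _ = 4 / a₀ ^ 2 * (∫ t in Set.Ioi T, (t - T) * |deriv A t|) * M := by ring
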